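/- Let ν ∈ (−1/2,1), β > 5 and w(v) = (1+|v|)^β. Assume F₀ ≥ 0 is measurable with ∥wF₀∥_{L∞} < ∞ and that there is C₀ > 0 with ∫_{ℝ³} F₀(x−vt,v)dv ≥ C₀ for all t ≥ 0 and x ∈ ℝ³. Let F be a nonnegative mild solution of the ES-BGK equation with initial datum F₀ and let t₁ = (4C_β(ν)∥wF₀∥_{L∞})^{−1} be as in the local L∞ estimate. Then there exists a constant C₁ ≥ 1, depending only on C₀, ν, β and ∥wF₀∥_{L∞}, such that for all 0 ≤ t ≤ t₁ and x ∈ ℝ³: C₁^{−1} ≤ ρ(t,x) ≤ C₁, C₁^{−1} ≤ T(t,x) ≤ C₁, and |u(t,x)| ≤ C₁. -/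

import Mathlib

open MeasureTheory Real Matrix ENNReal

noncomputable section

/-- Velocity/position space `ℝ³`. -/
abbrev E3 : Type := EuclideanSpace ℝ (Fin 3)

/-- The normalized global Maxwellian `μ(v) = (2π)^{-3/2} exp(-|v|²/2)`. -/
def Mw (v : E3) : ℝ := (2 * π) ^ (-(3 : ℝ) / 2) * Real.exp (-‖v‖ ^ 2 / 2)

/-- Density `ρ = ∫ g dv`. -/
def dens (g : E3 → ℝ) : ℝ := ∫ v, g v

/-- Bulk velocity `u = ρ⁻¹ ∫ v g dv`. -/
def bulk (g : E3 → ℝ) : E3 := (dens g)⁻¹ • ∫ v, g v • v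

/-- Temperature `T = (3ρ)⁻¹ ∫ |v-u|² g dv`. -/
def temp (g : E3 → ℝ) : ℝ := (3 * dens g)⁻¹ * ∫ v, ‖v - bulk g‖ ^ 2 * g v

/-- Stress tensor `Θ = ρ⁻¹ ∫ (v-u)⊗(v-u) g dv`. -/
def stress (g : E3 → ℝ) : Matrix (Fin 3) (Fin 3) ℝ :=
  Matrix.of fun i j => (dens g)⁻¹ * ∫ v, (v - bulk g) i * (v - bulk g) j * g v

/-- Temperature tensor `𝒯_ν = (1-ν) T Id + ν Θ`. -/
def tempTensor (g : E3 → ℝ) (ν : ℝ) : Matrix (Fin 3) (Fin 3) ℝ :=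
  ((1 - ν) * temp g) • (1 : Matrix (Fin 3) (Fin 3) ℝ) + ν • stress g

/-- Anisotropic Gaussian `M_ν = ρ det(2π𝒯_ν)^{-1/2} exp(-½ (v-u)ᵀ𝒯_ν⁻¹(v-u))`. -/
def aGauss (g : E3 → ℝ) (ν : ℝ) (v : E3) : ℝ :=
  dens g / Real.sqrt (((2 * π) • tempTensor g ν).det) *
    Real.exp (-(1 / 2) *
      ((fun i => (v - bulk g) i) ⬝ᵥ ((tempTensor g ν)⁻¹ *ᵥ fun i => (v - bulk g) i)))

/-- Collision frequency `A_ν = ρT/(1-ν)`. -/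
def collFreq (g : E3 → ℝ) (ν : ℝ) : ℝ := dens g * temp g / (1 - ν)

/-- Weighted sup-norm `‖w f‖_{L^∞} = sup_{x,v} (1+|v|)^β f(x,v)`. -/
def wSup (β : ℝ) (f : E3 → E3 → ℝ) : ℝ :=
  ⨆ p : E3 × E3, (1 + ‖p.2‖) ^ β * f p.1 p.2

/-- Finiteness of the weighted sup-norm. -/
def WBdd (β : ℝ) (f : E3 → E3 → ℝ) : Prop :=
  BddAbove (Set.range fun p : E3 × E3 => (1 + ‖p.2‖) ^ β * f p.1 p.2)

/-- A (global-in-time) mild solution of the ES-BGK equation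
`∂ₜF + v·∇ₓF = A_ν (M_ν - F)` with initial datum `F₀`. -/
structure IsMildSolution (ν β : ℝ) (F₀ : E3 → E3 → ℝ) (F : ℝ → E3 → E3 → ℝ) : Prop where
  nonneg : ∀ t, 0 ≤ t → ∀ x v, 0 ≤ F t x v
  meas : ∀ t, 0 ≤ t → Measurable fun p : E3 × E3 => F t p.1 p.2
  integrable : ∀ t, 0 ≤ t → ∀ x, Integrable (F t x)
  moment2 : ∀ t, 0 ≤ t → ∀ x, Integrable fun v => ‖v‖ ^ 2 * F t x v
  dens_pos : ∀ t, 0 ≤ t → ∀ x, 0 < dens (F t x)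
  temp_pos : ∀ t, 0 ≤ t → ∀ x, 0 < temp (F t x)
  wnorm_bdd : ∀ t, 0 ≤ t → WBdd β (F t)
  wnorm_cont : ContinuousOn (fun t => wSup β (F t)) (Set.Ici 0)
  mild : ∀ t, 0 ≤ t → ∀ x v,
    F t x v = F₀ (x - t • v) v *
        Real.exp (-(∫ τ in (0 : ℝ)..t, collFreq (F τ (x - (t - τ) • v)) ν))
      + ∫ s in (0 : ℝ)..t,
          Real.exp (-(∫ τ in s..t, collFreq (F τ (x - (t - τ) • v)) ν)) *
            collFreq (F s (x - (t - s) • v)) ν * aGauss (F s (x - (t - s) • v)) ν v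

/-- The entropy functional `ℰ(F₀)`. -/
def entE (F₀ : E3 → E3 → ℝ) : ℝ :=
  (∫ p : E3 × E3, (F₀ p.1 p.2 * Real.log (F₀ p.1 p.2) - Mw p.2 * Real.log (Mw p.2)))
    + (3 / 2 * Real.log (2 * π) - 1) * (∫ p : E3 × E3, (F₀ p.1 p.2 - Mw p.2))
    + 1 / 2 * ∫ p : E3 × E3, ‖p.2‖ ^ 2 * (F₀ p.1 p.2 - Mw p.2)

/-- Componentwise absolute value of `∫ (1, v, |v|², v⊗v) (f - μ) dv`. -/
def momentGap (f : E3 → ℝ) : ℝ :=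
  |∫ v, (f v - Mw v)| ⊔ (⨆ i : Fin 3, |∫ v, v i * (f v - Mw v)|) ⊔
    |∫ v, ‖v‖ ^ 2 * (f v - Mw v)| ⊔
    ⨆ ij : Fin 3 × Fin 3, |∫ v, v ij.1 * v ij.2 * (f v - Mw v)|

/-- `N_q(g) = sup_v (1+|v|)^q g(v)`, valued in `ℝ≥0∞`. -/
def Nq (q : ℝ) (g : E3 → ℝ) : ℝ≥0∞ :=
  ⨆ v : E3, ENNReal.ofReal ((1 + ‖v‖) ^ q * g v)

end

/-!
On `[0, t₁]` the bound `‖w F(t)‖_∞ ≤ 2M` gives `F(t,x,v) ≤ 2M (1+|v|)^{-β}`, and since `β > 5`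
the moments `∫ |v|^k F dv`, `k ≤ 2`, are bounded by `2M ∫ (1+|v|)^{k-β} dv`. This bounds `ρ` from
above and, as `ρT ≤ ⅓ ∫ |v|² F dv`, the collision frequency by a constant `B`. Dropping the gain
term of the mild formulation gives `F(t,x,v) ≥ e^{-t₁B} F₀(x-vt,v)`, hence `ρ ≥ e^{-t₁B} C₀`.
Once `ρ` is bounded below, the moment bounds control `T` and `|u|` from above. For the lower
bound on `T`: a density bounded by `2M` carries at most half of its mass in a ball of a suitable
radius `R`, so `3ρT = ∫ |v-u|² F dv ≥ R² ρ / 2`.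
-/

open Metric Set Module
open scoped RealInnerProductSpace

section WeightedMoments

variable {E : Type*} [NormedAddCommGroup E] {g : E → ℝ} {K β : ℝ}

lemma norm_pow_mul_le_of_le_weight (hg0 : ∀ v, 0 ≤ g v)
    (hgK : ∀ v, g v ≤ K * (1 + ‖v‖) ^ (-β)) (k : ℕ) (v : E) :
    ‖v‖ ^ k * g v ≤ K * (1 + ‖v‖) ^ ((k : ℝ) - β) := by
  have hv : 0 < 1 + ‖v‖ := by positivity
  calc ‖v‖ ^ k * g v ≤ (1 + ‖v‖) ^ k * (K * (1 + ‖v‖) ^ (-β)) :=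
        mul_le_mul (pow_le_pow_left₀ (norm_nonneg v) (by linarith) k) (hgK v) (hg0 v)
          (by positivity)
    _ = K * (1 + ‖v‖) ^ ((k : ℝ) - β) := by
        rw [sub_eq_add_neg, Real.rpow_add hv, Real.rpow_natCast]; ring

variable [NormedSpace ℝ E] [FiniteDimensional ℝ E] [MeasurableSpace E] [BorelSpace E]
  {μ : Measure E} [μ.IsAddHaarMeasure]

lemma integrable_norm_pow_mul_of_le_weight (hg : AEStronglyMeasurable g μ) (hg0 : ∀ v, 0 ≤ g v)
    (hgK : ∀ v, g v ≤ K * (1 + ‖v‖) ^ (-β)) {k : ℕ} (hk : (finrank ℝ E : ℝ) + k < β) :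
    Integrable (fun v => ‖v‖ ^ k * g v) μ := by
  have hW := (integrable_one_add_norm (μ := μ) (r := β - k) (by linarith)).const_mul K
  simp only [neg_sub] at hW
  refine hW.mono' ((continuous_norm.pow k).aestronglyMeasurable.mul hg) ?_
  filter_upwards with v
  rw [Real.norm_of_nonneg (mul_nonneg (by positivity) (hg0 v))]
  exact norm_pow_mul_le_of_le_weight hg0 hgK k v

lemma integral_norm_pow_mul_le_of_le_weight (hg : AEStronglyMeasurable g μ)
    (hg0 : ∀ v, 0 ≤ g v) (hgK : ∀ v, g v ≤ K * (1 + ‖v‖) ^ (-β)) {k : ℕ}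
    (hk : (finrank ℝ E : ℝ) + k < β) :
    ∫ v, ‖v‖ ^ k * g v ∂μ ≤ K * ∫ v, (1 + ‖v‖) ^ ((k : ℝ) - β) ∂μ := by
  have hW := integrable_one_add_norm (μ := μ) (r := β - k) (by linarith)
  simp only [neg_sub] at hW
  rw [← integral_const_mul]
  exact integral_mono (integrable_norm_pow_mul_of_le_weight hg hg0 hgK hk) (hW.const_mul K)
    (norm_pow_mul_le_of_le_weight hg0 hgK k)

lemma integrable_of_le_weight (hg : AEStronglyMeasurable g μ) (hg0 : ∀ v, 0 ≤ g v)
    (hgK : ∀ v, g v ≤ K * (1 + ‖v‖) ^ (-β)) (hk : (finrank ℝ E : ℝ) < β) : Integrable g μ := by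
  simpa using integrable_norm_pow_mul_of_le_weight (k := 0) hg hg0 hgK (by simpa using hk)

lemma integrable_smul_of_le_weight (hg : AEStronglyMeasurable g μ) (hg0 : ∀ v, 0 ≤ g v)
    (hgK : ∀ v, g v ≤ K * (1 + ‖v‖) ^ (-β)) (hk : (finrank ℝ E : ℝ) + 1 < β) :
    Integrable (fun v => g v • v) μ := by
  refine (integrable_norm_pow_mul_of_le_weight (k := 1) hg hg0 hgK (by exact_mod_cast hk)).mono'
    (hg.smul aestronglyMeasurable_id) ?_
  filter_upwards with v
  rw [norm_smul, Real.norm_of_nonneg (hg0 v), pow_one, mul_comm]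

end WeightedMoments

section SecondMoment

variable {E : Type*} [NormedAddCommGroup E] [InnerProductSpace ℝ E] {g : E → ℝ}

lemma norm_sub_sq_mul_eq (u v : E) :
    ‖v - u‖ ^ 2 * g v = ‖v‖ ^ 2 * g v - 2 * ⟪u, g v • v⟫ + ‖u‖ ^ 2 * g v := by
  rw [norm_sub_sq_real, real_inner_smul_right, real_inner_comm]; ring

variable [MeasurableSpace E] {μ : Measure E}

lemma integrable_norm_sub_sq_mul (hg : Integrable g μ) (hg1 : Integrable (fun v => g v • v) μ)
    (hg2 : Integrable (fun v => ‖v‖ ^ 2 * g v) μ) (u : E) :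
    Integrable (fun v => ‖v - u‖ ^ 2 * g v) μ := by
  simp only [norm_sub_sq_mul_eq u]
  exact (hg2.sub ((hg1.const_inner u).const_mul 2)).add (hg.const_mul _)

variable [CompleteSpace E] in
lemma integral_norm_sub_sq_mul (hg : Integrable g μ) (hg1 : Integrable (fun v => g v • v) μ)
    (hg2 : Integrable (fun v => ‖v‖ ^ 2 * g v) μ) (u : E) :
    ∫ v, ‖v - u‖ ^ 2 * g v ∂μ =
      ∫ v, ‖v‖ ^ 2 * g v ∂μ - 2 * ⟪u, ∫ v, g v • v ∂μ⟫ + ‖u‖ ^ 2 * ∫ v, g v ∂μ := by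
  have hg1u : Integrable (fun v => 2 * ⟪u, g v • v⟫) μ := (hg1.const_inner u).const_mul 2
  have hsub : Integrable (fun v => ‖v‖ ^ 2 * g v - 2 * ⟪u, g v • v⟫) μ := hg2.sub hg1u
  simp only [norm_sub_sq_mul_eq u]
  rw [integral_add hsub (hg.const_mul _), integral_sub hg2 hg1u, integral_const_mul,
    integral_const_mul, integral_inner hg1]

end SecondMoment

lemma sq_mul_sub_le_integral_norm_sub_sq_mul {E : Type*} [NormedAddCommGroup E]
    [MeasurableSpace E] [OpensMeasurableSpace E] {μ : Measure E} {g : E → ℝ} {K R : ℝ} {u : E}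
    (hg0 : ∀ v, 0 ≤ g v) (hgK : ∀ v, g v ≤ K) (hg : Integrable g μ)
    (hgu : Integrable (fun v => ‖v - u‖ ^ 2 * g v) μ) (hR : 0 ≤ R) (hball : μ (ball u R) ≠ ⊤) :
    R ^ 2 * (∫ v, g v ∂μ - K * μ.real (ball u R)) ≤ ∫ v, ‖v - u‖ ^ 2 * g v ∂μ := by
  have hB : MeasurableSet (ball u R) := measurableSet_ball
  have h_in : ∫ v in ball u R, g v ∂μ ≤ K * μ.real (ball u R) := by
    calc ∫ v in ball u R, g v ∂μ ≤ ∫ _ in ball u R, K ∂μ :=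
          setIntegral_mono_on hg.integrableOn (integrableOn_const hball) hB fun v _ => hgK v
      _ = K * μ.real (ball u R) := by rw [setIntegral_const, smul_eq_mul, mul_comm]
  have h_out : ∀ v ∈ (ball u R)ᶜ, R ^ 2 * g v ≤ ‖v - u‖ ^ 2 * g v := fun v hv => by
    have : R ≤ ‖v - u‖ := by simpa [dist_eq_norm] using hv
    gcongr
    exact hg0 v
  calc R ^ 2 * (∫ v, g v ∂μ - K * μ.real (ball u R))
      ≤ R ^ 2 * ∫ v in (ball u R)ᶜ, g v ∂μ := by
        rw [← integral_add_compl hB hg]; gcongr; linarith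
    _ = ∫ v in (ball u R)ᶜ, R ^ 2 * g v ∂μ := (integral_const_mul _ _).symm
    _ ≤ ∫ v in (ball u R)ᶜ, ‖v - u‖ ^ 2 * g v ∂μ :=
        setIntegral_mono_on (hg.const_mul _).integrableOn hgu.integrableOn hB.compl h_out
    _ ≤ ∫ v, ‖v - u‖ ^ 2 * g v ∂μ :=
        setIntegral_le_integral hgu (.of_forall fun v => mul_nonneg (sq_nonneg _) (hg0 v))

section VelocityDistribution

variable {g : E3 → ℝ}

lemma dens_nonneg (hg0 : ∀ v, 0 ≤ g v) : 0 ≤ dens g := integral_nonneg hg0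

lemma integral_norm_sub_bulk_sq_le (hg0 : ∀ v, 0 ≤ g v) (hg : Integrable g)
    (hg1 : Integrable fun v => g v • v) (hg2 : Integrable fun v => ‖v‖ ^ 2 * g v) :
    ∫ v, ‖v - bulk g‖ ^ 2 * g v ≤ ∫ v, ‖v‖ ^ 2 * g v := by
  rw [integral_norm_sub_sq_mul hg hg1 hg2]
  rcases eq_or_ne (dens g) 0 with hρ | hρ
  · simp [bulk, hρ]
  · have hmom : ∫ v, g v • v = dens g • bulk g := by
      rw [bulk, smul_smul, mul_inv_cancel₀ hρ, one_smul]
    rw [hmom, real_inner_smul_right, real_inner_self_eq_norm_sq]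
    change _ - _ + _ * dens g ≤ _
    nlinarith [mul_nonneg (dens_nonneg hg0) (sq_nonneg ‖bulk g‖)]

lemma temp_le (hg0 : ∀ v, 0 ≤ g v) (hg : Integrable g) (hg1 : Integrable fun v => g v • v)
    (hg2 : Integrable fun v => ‖v‖ ^ 2 * g v) :
    temp g ≤ (3 * dens g)⁻¹ * ∫ v, ‖v‖ ^ 2 * g v :=
  mul_le_mul_of_nonneg_left (integral_norm_sub_bulk_sq_le hg0 hg hg1 hg2)
    (by have := dens_nonneg hg0; positivity)

lemma dens_mul_temp (hρ : dens g ≠ 0) :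
    dens g * temp g = (∫ v, ‖v - bulk g‖ ^ 2 * g v) / 3 := by
  rw [temp]; field_simp

lemma norm_bulk_le (hg0 : ∀ v, 0 ≤ g v) : ‖bulk g‖ ≤ (dens g)⁻¹ * ∫ v, ‖v‖ * g v := by
  rw [bulk, norm_smul, Real.norm_of_nonneg (inv_nonneg.2 (dens_nonneg hg0))]
  refine mul_le_mul_of_nonneg_left ?_ (inv_nonneg.2 (dens_nonneg hg0))
  calc ‖∫ v, g v • v‖ ≤ ∫ v, ‖g v • v‖ := norm_integral_le_integral_norm _
    _ = ∫ v, ‖v‖ * g v := by simp_rw [norm_smul, Real.norm_of_nonneg (hg0 _), mul_comm]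

lemma measureReal_ball_E3 (u : E3) {R : ℝ} (hR : 0 ≤ R) :
    volume.real (ball u R) = R ^ 3 * volume.real (ball (0 : E3) 1) := by
  rw [measureReal_def, measureReal_def, Measure.addHaar_ball _ _ hR, finrank_euclideanSpace_fin,
    ENNReal.toReal_mul, ENNReal.toReal_ofReal (by positivity)]

lemma sq_div_six_le_temp {K R : ℝ} (hg0 : ∀ v, 0 ≤ g v) (hgK : ∀ v, g v ≤ K) (hg : Integrable g)
    (hg1 : Integrable fun v => g v • v) (hg2 : Integrable fun v => ‖v‖ ^ 2 * g v) (hR : 0 ≤ R)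
    (hρ : 0 < dens g) (hmass : 2 * (K * (R ^ 3 * volume.real (ball (0 : E3) 1))) ≤ dens g) :
    R ^ 2 / 6 ≤ temp g := by
  have hQ := sq_mul_sub_le_integral_norm_sub_sq_mul hg0 hgK hg
    (integrable_norm_sub_sq_mul hg hg1 hg2 (bulk g)) hR measure_ball_lt_top.ne
  rw [measureReal_ball_E3 _ hR] at hQ
  have h3 := dens_mul_temp hρ.ne'
  change R ^ 2 * (dens g - _) ≤ _ at hQ
  nlinarith [sq_nonneg R]

end VelocityDistribution

lemma le_mul_rpow_neg_of_wSup_le {β K : ℝ} {f : E3 → E3 → ℝ} (hf : WBdd β f)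
    (hK : wSup β f ≤ K) (x v : E3) : f x v ≤ K * (1 + ‖v‖) ^ (-β) := by
  have hw : 0 < (1 + ‖v‖) ^ β := by positivity
  rw [Real.rpow_neg (by positivity), ← div_eq_mul_inv, le_div_iff₀ hw, mul_comm]
  exact (le_ciSup hf (x, v)).trans hK

section WeightBound

variable {g : E3 → ℝ} {K β : ℝ}

lemma integrable_moments_of_le_weight (hβ : 5 < β) (hg : Measurable g) (hg0 : ∀ v, 0 ≤ g v)
    (hgK : ∀ v, g v ≤ K * (1 + ‖v‖) ^ (-β)) :
    Integrable g ∧ Integrable (fun v => g v • v) ∧ Integrable (fun v => ‖v‖ ^ 2 * g v) := by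
  have hd : (finrank ℝ E3 : ℝ) = 3 := by simp
  have hgm : AEStronglyMeasurable g := hg.aestronglyMeasurable
  exact ⟨integrable_of_le_weight hgm hg0 hgK (by linarith),
    integrable_smul_of_le_weight hgm hg0 hgK (by linarith),
    integrable_norm_pow_mul_of_le_weight hgm hg0 hgK (by push_cast; linarith)⟩

lemma collFreq_le_of_le_weight {ν : ℝ} (hν : ν < 1) (hβ : 5 < β) (hg : Measurable g)
    (hg0 : ∀ v, 0 ≤ g v) (hgK : ∀ v, g v ≤ K * (1 + ‖v‖) ^ (-β)) (hρ : dens g ≠ 0) :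
    collFreq g ν ≤ K * (∫ v : E3, (1 + ‖v‖) ^ ((2 : ℝ) - β)) / (3 * (1 - ν)) := by
  obtain ⟨hint, hint1, hint2⟩ := integrable_moments_of_le_weight hβ hg hg0 hgK
  have hS := integral_norm_pow_mul_le_of_le_weight (μ := volume) (k := 2)
    hg.aestronglyMeasurable hg0 hgK (by simp; linarith)
  have hQ := integral_norm_sub_bulk_sq_le hg0 hint hint1 hint2
  rw [collFreq, dens_mul_temp hρ, div_div, mul_comm 3]
  push_cast at hS
  exact div_le_div_of_nonneg_right (hQ.trans hS) (by linarith)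

lemma exists_macroscopic_bounds_of_le_weight (hβ : 5 < β) {ρ₀ : ℝ} (hρ₀ : 0 < ρ₀) :
    ∃ C ≥ (1 : ℝ), ∀ g : E3 → ℝ, Measurable g → (∀ v, 0 ≤ g v) →
      (∀ v, g v ≤ K * (1 + ‖v‖) ^ (-β)) → ρ₀ ≤ dens g →
        C⁻¹ ≤ dens g ∧ dens g ≤ C ∧ C⁻¹ ≤ temp g ∧ temp g ≤ C ∧ ‖bulk g‖ ≤ C := by
  set W : ℕ → ℝ := fun k => ∫ v : E3, (1 + ‖v‖) ^ ((k : ℝ) - β)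
  set c : ℝ := volume.real (ball (0 : E3) 1)
  -- the radius of a ball that can carry at most half of the mass `ρ₀` of a density `≤ K`
  set R : ℝ := (ρ₀ / (2 * K * c)) ^ (3⁻¹ : ℝ)
  refine ⟨max 1 (max (K * W 0) (max ρ₀⁻¹ (max (K * W 2 / (3 * ρ₀))
    (max (R ^ 2 / 6)⁻¹ (K * W 1 / ρ₀))))), le_max_left _ _, ?_⟩
  intro g hg hg0 hgK hρ
  have hmom (k : ℕ) (hk : k ≤ 2) : ∫ v, ‖v‖ ^ k * g v ≤ K * W k :=
    integral_norm_pow_mul_le_of_le_weight hg.aestronglyMeasurable hg0 hgK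
      (by simp; linarith [show (k : ℝ) ≤ 2 by exact_mod_cast hk])
  obtain ⟨hint, hint1, hint2⟩ := integrable_moments_of_le_weight hβ hg hg0 hgK
  have hdens : dens g ≤ K * W 0 := by simpa [dens, W] using hmom 0 (by norm_num)
  have hρpos : 0 < dens g := hρ₀.trans_le hρ
  have hK : 0 < K := pos_of_mul_pos_left (hρpos.trans_le hdens)
    (integral_nonneg fun v => by positivity)
  have hc : 0 < c := ENNReal.toReal_pos (measure_ball_pos _ _ one_pos).ne' measure_ball_lt_top.ne
  have hR3 : R ^ 3 = ρ₀ / (2 * K * c) := by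
    rw [← Real.rpow_natCast, ← Real.rpow_mul (by positivity)]; norm_num
  have htemp_ge : R ^ 2 / 6 ≤ temp g := by
    refine sq_div_six_le_temp (K := K) hg0 (fun v => (hgK v).trans ?_) hint hint1 hint2
      (by positivity) hρpos ?_
    · exact mul_le_of_le_one_right hK.le
        (Real.rpow_le_one_of_one_le_of_nonpos (by simp) (by linarith))
    · change 2 * (K * (R ^ 3 * c)) ≤ dens g
      rw [hR3]; field_simp; linarith
  have htemp_le : temp g ≤ K * W 2 / (3 * ρ₀) := by
    calc temp g ≤ (3 * dens g)⁻¹ * ∫ v, ‖v‖ ^ 2 * g v := temp_le hg0 hint hint1 hint2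
      _ ≤ (3 * ρ₀)⁻¹ * (K * W 2) := by
        gcongr
        exacts [integral_nonneg fun v => mul_nonneg (by positivity) (hg0 v), hmom 2 le_rfl]
      _ = K * W 2 / (3 * ρ₀) := by ring
  have hbulk : ‖bulk g‖ ≤ K * W 1 / ρ₀ := by
    calc ‖bulk g‖ ≤ (dens g)⁻¹ * ∫ v, ‖v‖ * g v := norm_bulk_le hg0
      _ ≤ ρ₀⁻¹ * (K * W 1) := by
        gcongr
        exacts [integral_nonneg fun v => mul_nonneg (by positivity) (hg0 v),
          by simpa using hmom 1 (by norm_num)]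
      _ = K * W 1 / ρ₀ := by ring
  refine ⟨(inv_le_of_inv_le₀ hρ₀ (by simp)).trans hρ, hdens.trans (by simp),
    inv_le_of_inv_le₀ (by positivity) (by simp) |>.trans htemp_ge, htemp_le.trans (by simp),
    hbulk.trans (by simp)⟩

end WeightBound

lemma aGauss_nonneg {g : E3 → ℝ} (hg : 0 ≤ dens g) (ν : ℝ) (v : E3) : 0 ≤ aGauss g ν v :=
  mul_nonneg (div_nonneg hg (Real.sqrt_nonneg _)) (Real.exp_pos _).le

namespace IsMildSolution

variable {ν β : ℝ} {F₀ : E3 → E3 → ℝ} {F : ℝ → E3 → E3 → ℝ}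

lemma measurable_apply (sol : IsMildSolution ν β F₀ F) {t : ℝ} (ht : 0 ≤ t) (x : E3) :
    Measurable (F t x) :=
  (sol.meas t ht).comp measurable_prodMk_left

lemma collFreq_nonneg (sol : IsMildSolution ν β F₀ F) (hν : ν < 1) {t : ℝ} (ht : 0 ≤ t)
    (x : E3) : 0 ≤ collFreq (F t x) ν :=
  div_nonneg (mul_nonneg (sol.dens_pos t ht x).le (sol.temp_pos t ht x).le) (by linarith)

lemma exp_mul_le (sol : IsMildSolution ν β F₀ F) (hν : ν < 1) (hF₀ : ∀ x v, 0 ≤ F₀ x v)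
    {t T B : ℝ} (ht : t ∈ Icc 0 T) (hB : ∀ s ∈ Icc 0 T, ∀ y, collFreq (F s y) ν ≤ B)
    (x v : E3) : exp (-(T * B)) * F₀ (x - t • v) v ≤ F t x v := by
  have hB0 : 0 ≤ B := (sol.collFreq_nonneg hν ht.1 x).trans (hB t ht x)
  have hJ : ∫ τ in (0 : ℝ)..t, collFreq (F τ (x - (t - τ) • v)) ν ≤ T * B := by
    calc ∫ τ in (0 : ℝ)..t, collFreq (F τ (x - (t - τ) • v)) ν
        ≤ ‖∫ τ in (0 : ℝ)..t, collFreq (F τ (x - (t - τ) • v)) ν‖ := Real.le_norm_self _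
      _ ≤ B * |t - 0| := intervalIntegral.norm_integral_le_of_norm_le_const fun τ hτ => by
          rw [uIoc_of_le ht.1] at hτ
          have hτ' : τ ∈ Icc 0 T := ⟨hτ.1.le, hτ.2.trans ht.2⟩
          rw [Real.norm_of_nonneg (sol.collFreq_nonneg hν hτ'.1 _)]
          exact hB τ hτ' _
      _ ≤ T * B := by rw [sub_zero, abs_of_nonneg ht.1, mul_comm]; gcongr; exact ht.2
  rw [sol.mild t ht.1 x v, mul_comm]
  refine le_add_of_le_of_nonneg ?_ ?_
  · gcongr
    exact hF₀ _ _
  · refine intervalIntegral.integral_nonneg ht.1 fun s hs => ?_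
    exact mul_nonneg (mul_nonneg (Real.exp_pos _).le (sol.collFreq_nonneg hν hs.1 _))
      (aGauss_nonneg (sol.dens_pos s hs.1 _).le ν v)

lemma exp_mul_le_dens (sol : IsMildSolution ν β F₀ F) (hν : ν < 1) (hF₀ : ∀ x v, 0 ≤ F₀ x v)
    {t T B C₀ : ℝ} (ht : t ∈ Icc 0 T) (hB : ∀ s ∈ Icc 0 T, ∀ y, collFreq (F s y) ν ≤ B)
    {x : E3} (hC₀ : 0 < C₀) (hlow : C₀ ≤ ∫ v, F₀ (x - t • v) v) :
    exp (-(T * B)) * C₀ ≤ dens (F t x) := by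
  have hint : Integrable fun v => F₀ (x - t • v) v :=
    Integrable.of_integral_ne_zero (hC₀.trans_le hlow).ne'
  calc exp (-(T * B)) * C₀ ≤ exp (-(T * B)) * ∫ v, F₀ (x - t • v) v := by gcongr
    _ = ∫ v, exp (-(T * B)) * F₀ (x - t • v) v := (integral_const_mul _ _).symm
    _ ≤ dens (F t x) := integral_mono (hint.const_mul _) (sol.integrable t ht.1 x)
        (sol.exp_mul_le hν hF₀ ht hB x)

end IsMildSolution

theorem local_macroscopic_bounds_general
    (ν β : ℝ) (hν2 : ν < 1) (hβ : 5 < β)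
    (C₀ : ℝ) (hC₀ : 0 < C₀) (M : ℝ) (Cβν : ℝ) :
    ∃ C1 ≥ (1 : ℝ), ∀ (F₀ : E3 → E3 → ℝ) (F : ℝ → E3 → E3 → ℝ),
      Measurable (fun p : E3 × E3 => F₀ p.1 p.2) →
      (∀ x v, 0 ≤ F₀ x v) →
      WBdd β F₀ →
      wSup β F₀ = M →
      (∀ t : ℝ, 0 ≤ t → ∀ x : E3, C₀ ≤ ∫ v, F₀ (x - t • v) v) →
      IsMildSolution ν β F₀ F →
      (∀ t ∈ Set.Icc (0 : ℝ) (4 * Cβν * wSup β F₀)⁻¹, wSup β (F t) ≤ 2 * wSup β F₀) →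
      ∀ t ∈ Set.Icc (0 : ℝ) (4 * Cβν * wSup β F₀)⁻¹, ∀ x : E3,
        C1⁻¹ ≤ dens (F t x) ∧ dens (F t x) ≤ C1 ∧
        C1⁻¹ ≤ temp (F t x) ∧ temp (F t x) ≤ C1 ∧ ‖bulk (F t x)‖ ≤ C1 := by
  set t₁ := (4 * Cβν * M)⁻¹
  set B := 2 * M * (∫ v : E3, (1 + ‖v‖) ^ ((2 : ℝ) - β)) / (3 * (1 - ν))
  obtain ⟨C, hC1, hC⟩ := exists_macroscopic_bounds_of_le_weight (K := 2 * M) hβ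
    (ρ₀ := exp (-(t₁ * B)) * C₀) (by positivity)
  refine ⟨C, hC1, ?_⟩
  rintro F₀ F - hF₀ - rfl hlow sol hsol t ht x
  have hF : ∀ s ∈ Icc 0 t₁, ∀ y v, F s y v ≤ 2 * wSup β F₀ * (1 + ‖v‖) ^ (-β) :=
    fun s hs => le_mul_rpow_neg_of_wSup_le (sol.wnorm_bdd s hs.1) (hsol s hs)
  have hA : ∀ s ∈ Icc 0 t₁, ∀ y, collFreq (F s y) ν ≤ B := fun s hs y =>
    collFreq_le_of_le_weight hν2 hβ (sol.measurable_apply hs.1 y) (sol.nonneg s hs.1 y)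
      (hF s hs y) (sol.dens_pos s hs.1 y).ne'
  exact hC (F t x) (sol.measurable_apply ht.1 x) (sol.nonneg t ht.1 x) (hF t ht x)
    (sol.exp_mul_le_dens hν2 hF₀ ht hA hC₀ (hlow t ht.1 x))

/-- Lemma 3.2: bounds on the macroscopic quantities on the local
time interval `[0, t₁]`, `t₁ = (4C_β(ν)‖wF₀‖_{L^∞})⁻¹` from the local `L^∞` estimate. -/
theorem local_macroscopic_bounds
    (ν β : ℝ) (hν1 : -(1 / 2 : ℝ) < ν) (hν2 : ν < 1) (hβ : 5 < β)
    (C₀ : ℝ) (hC₀ : 0 < C₀) (M : ℝ) (Cβν : ℝ) (hCβν : 0 < Cβν) :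
    ∃ C1 ≥ (1 : ℝ), ∀ (F₀ : E3 → E3 → ℝ) (F : ℝ → E3 → E3 → ℝ),
      Measurable (fun p : E3 × E3 => F₀ p.1 p.2) →
      (∀ x v, 0 ≤ F₀ x v) →
      WBdd β F₀ →
      wSup β F₀ = M →
      (∀ t : ℝ, 0 ≤ t → ∀ x : E3, C₀ ≤ ∫ v, F₀ (x - t • v) v) →
      IsMildSolution ν β F₀ F →
      (∀ t ∈ Set.Icc (0 : ℝ) (4 * Cβν * wSup β F₀)⁻¹, wSup β (F t) ≤ 2 * wSup β F₀) →
      ∀ t ∈ Set.Icc (0 : ℝ) (4 * Cβν * wSup β F₀)⁻¹, ∀ x : E3,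
        C1⁻¹ ≤ dens (F t x) ∧ dens (F t x) ≤ C1 ∧
        C1⁻¹ ≤ temp (F t x) ∧ temp (F t x) ≤ C1 ∧ ‖bulk (F t x)‖ ≤ C1 :=
  local_macroscopic_bounds_general ν β hν2 hβ C₀ hC₀ M Cβν
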